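/- Let G be a finite simple graph, d a nonnegative integer, S ⊆ V(G), and X ⊆ S with |X| = 2d + 1. Let Z be the set of vertices v ∈ V(G) \ X having at most d neighbors in X. If |Z ∩ S| > (d + 1) · C(2d+1, d+1), then there exist a set A ⊆ Z ∩ S with |A| = d + 1 and a set B ⊆ X with |B| = d + 1 such that every vertex of A is adjacent to every vertex of B in G ⊕ S; in particular, G ⊕ S contains K_{d+1,d+1} as a subgraph. -/

import Mathlib

/-!
Every `v ∈ Z ∩ S` misses at least `d + 1` of the `2d + 1` vertices of `X` in `G`, so it has
a `(d + 1)`-subset `B_v ⊆ X` of non-neighbours. There are only `C(2d+1, d+1)` candidates for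
`B_v`, so by pigeonhole some `B` is shared by `d + 1` vertices `A`. As `A` and `B` lie in `S`,
the partial complement turns these non-edges into edges.
-/

/-- The partial complement `G ⊕ S` of a simple graph `G` with respect to a vertex set `S`:
distinct vertices `u, v` are adjacent iff either they are adjacent in `G` and not both
belong to `S`, or they are nonadjacent in `G` and both belong to `S`. -/
def SimpleGraph.partialComplement {V : Type*} (G : SimpleGraph V) (S : Set V) :
    SimpleGraph V where
  Adj u v := u ≠ v ∧ ((G.Adj u v ∧ ¬(u ∈ S ∧ v ∈ S)) ∨ (¬ G.Adj u v ∧ u ∈ S ∧ v ∈ S))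
  symm := by
    constructor
    intro u v h
    obtain ⟨hne, h⟩ := h
    refine ⟨hne.symm, ?_⟩
    rcases h with ⟨ha, hs⟩ | ⟨ha, hu, hv⟩
    · exact Or.inl ⟨ha.symm, fun hc => hs ⟨hc.2, hc.1⟩⟩
    · exact Or.inr ⟨fun hvu => ha hvu.symm, hv, hu⟩
  loopless := ⟨fun v h => h.1 rfl⟩

theorem Set.exists_subset_ncard_eq_fiber_of_mul_lt_ncard {α β : Type*} {T : Set α}
    {t : Finset β} {f : α → β} {k : ℕ} (hf : ∀ a ∈ T, f a ∈ t) (hk : t.card * k < T.ncard) :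
    ∃ y ∈ t, ∃ A ⊆ T, A.ncard = k + 1 ∧ ∀ a ∈ A, f a = y := by
  classical
  have hT : T.Finite := Set.finite_of_ncard_pos (by omega)
  rw [Set.ncard_eq_toFinset_card T hT] at hk
  obtain ⟨y, hy, hfiber⟩ := Finset.exists_lt_card_fiber_of_mul_lt_card_of_maps_to
    (fun a ha => hf a (hT.mem_toFinset.mp ha)) hk
  obtain ⟨A, hA, hAcard⟩ := Finset.exists_subset_card_eq (Nat.succ_le_of_lt hfiber)
  refine ⟨y, hy, A, fun a ha => ?_, by simpa using hAcard, fun a ha => ?_⟩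
  · exact hT.mem_toFinset.mp (Finset.mem_filter.mp (hA ha)).1
  · exact (Finset.mem_filter.mp (hA ha)).2

namespace SimpleGraph

variable {V : Type*} (G : SimpleGraph V)

theorem partialComplement_adj_of_not_adj {S : Set V} {u v : V} (huv : u ≠ v)
    (h : ¬G.Adj u v) (hu : u ∈ S) (hv : v ∈ S) : (G.partialComplement S).Adj u v :=
  ⟨huv, .inr ⟨h, hu, hv⟩⟩

theorem exists_subsets_not_adj_of_mul_choose_lt {X T : Set V} (hX : X.Finite) {m k : ℕ}
    (hT : ∀ v ∈ T, m ≤ (X \ G.neighborSet v).ncard) (hk : k * X.ncard.choose m < T.ncard) :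
    ∃ A ⊆ T, ∃ B ⊆ X, A.ncard = k + 1 ∧ B.ncard = m ∧ ∀ a ∈ A, ∀ b ∈ B, ¬G.Adj a b := by
  classical
  have hB : ∀ v ∈ T, ∃ B : Finset V, ↑B ⊆ X \ G.neighborSet v ∧ B.card = m := by
    intro v hv
    obtain ⟨B, hBsub, hBcard⟩ := Set.exists_subset_card_eq (hT v hv)
    have hBfin : B.Finite := hX.sdiff.subset hBsub
    exact ⟨hBfin.toFinset, by simpa using hBsub,
      by rw [← Set.ncard_eq_toFinset_card B hBfin, hBcard]⟩
  choose! f hfsub hfcard using hB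
  have hmaps : ∀ v ∈ T, f v ∈ hX.toFinset.powersetCard m := fun v hv =>
    Finset.mem_powersetCard.mpr
      ⟨fun x hx => hX.mem_toFinset.mpr (hfsub v hv hx).1, hfcard v hv⟩
  have hholes : (hX.toFinset.powersetCard m).card * k < T.ncard := by
    rwa [Finset.card_powersetCard, ← Set.ncard_eq_toFinset_card X hX, mul_comm]
  obtain ⟨B, hB, A, hAT, hAcard, hfA⟩ :=
    Set.exists_subset_ncard_eq_fiber_of_mul_lt_ncard hmaps hholes
  obtain ⟨hBX, hBcard⟩ := Finset.mem_powersetCard.mp hB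
  refine ⟨A, hAT, B, fun b hb => hX.mem_toFinset.mp (hBX hb), hAcard, by simpa using hBcard,
    fun a ha b hb => ?_⟩
  rw [← hfA a ha] at hb
  exact (hfsub a (hAT ha) hb).2

end SimpleGraph

theorem partialComplement_completeBipartite_of_many_low_degree_general {V : Type*}
    (G : SimpleGraph V) (d : ℕ) (S : Set V) (X : Set V)
    (hXS : X ⊆ S) (hX : X.ncard = 2 * d + 1) :
    let Z : Set V := {v | v ∉ X ∧ (G.neighborSet v ∩ X).ncard ≤ d}
    (d + 1) * Nat.choose (2 * d + 1) (d + 1) < (Z ∩ S).ncard →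
    ∃ A B : Set V, A ⊆ Z ∩ S ∧ B ⊆ X ∧ A.ncard = d + 1 ∧ B.ncard = d + 1 ∧
      ∀ a ∈ A, ∀ b ∈ B, (G.partialComplement S).Adj a b := by
  intro Z hZ
  have hXfin : X.Finite := Set.finite_of_ncard_pos (by omega)
  have hmiss : ∀ v ∈ Z ∩ S, d + 1 ≤ (X \ G.neighborSet v).ncard := by
    intro v hv
    have hsplit := Set.ncard_inter_add_ncard_sdiff_eq_ncard X (G.neighborSet v) hXfin
    have hlow : (X ∩ G.neighborSet v).ncard ≤ d := by rw [Set.inter_comm]; exact hv.1.2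
    omega
  obtain ⟨A, hAZ, B, hBX, hAcard, hBcard, hAB⟩ :=
    G.exists_subsets_not_adj_of_mul_choose_lt hXfin hmiss
      (hX ▸ (Nat.mul_le_mul_right _ d.le_succ).trans_lt hZ)
  refine ⟨A, B, hAZ, hBX, hAcard, hBcard, fun a ha b hb => ?_⟩
  have hab : a ≠ b := fun h => (hAZ ha).1.1 (h ▸ hBX hb)
  exact G.partialComplement_adj_of_not_adj hab (hAB a ha b hb) (hAZ ha).2 (hXS (hBX hb))

/-- Degenerate large-`Z` case: if `X ⊆ S` has size `2d+1` and more than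
`(d+1)·C(2d+1, d+1)` vertices of `S` (outside `X`) have at most `d` neighbors in `X`,
then `G ⊕ S` contains `K_{d+1,d+1}` as a subgraph, with one side inside `Z ∩ S` and
the other inside `X`. -/
theorem partialComplement_completeBipartite_of_many_low_degree {V : Type*} [Fintype V]
    (G : SimpleGraph V) (d : ℕ) (S : Set V) (X : Set V)
    (hXS : X ⊆ S) (hX : X.ncard = 2 * d + 1) :
    let Z : Set V := {v | v ∉ X ∧ (G.neighborSet v ∩ X).ncard ≤ d}
    (d + 1) * Nat.choose (2 * d + 1) (d + 1) < (Z ∩ S).ncard →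
    ∃ A B : Set V, A ⊆ Z ∩ S ∧ B ⊆ X ∧ A.ncard = d + 1 ∧ B.ncard = d + 1 ∧
      ∀ a ∈ A, ∀ b ∈ B, (G.partialComplement S).Adj a b :=
  partialComplement_completeBipartite_of_many_low_degree_general G d S X hXS hX
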